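/- For a scalar Riccati-type map g(p) = a²p + q - γ a² p²/(p + r) with a, q, r > 0 and γ ∈ [0,1], g is monotonically increasing in p on p ≥ 0 and monotonically decreasing in γ. -/
import Mathlib


/-- The scalar Riccati-type map `g(γ,p) = a²p + q - γ a² p²/(p+r)` is monotonically
increasing in `p` on `p ≥ 0` and monotonically decreasing in `γ`. -/
theorem riccati_monotone (a q r : ℝ) (ha : 0 < a) (hq : 0 < q) (hr : 0 < r) :
    (∀ γ : ℝ, 0 ≤ γ → γ ≤ 1 → ∀ p₁ p₂ : ℝ, 0 ≤ p₁ → p₁ ≤ p₂ →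
      a ^ 2 * p₁ + q - γ * a ^ 2 * p₁ ^ 2 / (p₁ + r) ≤
      a ^ 2 * p₂ + q - γ * a ^ 2 * p₂ ^ 2 / (p₂ + r)) ∧
    (∀ p : ℝ, 0 ≤ p → ∀ γ₁ γ₂ : ℝ, 0 ≤ γ₁ → γ₁ ≤ γ₂ → γ₂ ≤ 1 →
      a ^ 2 * p + q - γ₂ * a ^ 2 * p ^ 2 / (p + r) ≤
      a ^ 2 * p + q - γ₁ * a ^ 2 * p ^ 2 / (p + r)) := by
  have ha2 : 0 < a ^ 2 := by positivity
  constructor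
  · intro γ hγ0 hγ1 p₁ p₂ hp1 h12
    have hp2 : 0 ≤ p₂ := hp1.trans h12
    have h1 : 0 < p₁ + r := by linarith
    have h2 : 0 < p₂ + r := by linarith
    -- rewrite: a²p - γa²p²/(p+r) = (1-γ)a²p + γa²(r - r²/(p+r))
    have key : ∀ p : ℝ, 0 < p + r →
        a ^ 2 * p + q - γ * a ^ 2 * p ^ 2 / (p + r)
        = (1 - γ) * a ^ 2 * p + q + γ * a ^ 2 * (r - r ^ 2 / (p + r)) := by
      intro p hp
      field_simp
      ring
    rw [key p₁ h1, key p₂ h2]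
    have hfrac : r ^ 2 / (p₂ + r) ≤ r ^ 2 / (p₁ + r) :=
      div_le_div_of_nonneg_left (by positivity) h1 (by linarith)
    have hcoef : 0 ≤ γ * a ^ 2 := by positivity
    nlinarith [mul_le_mul_of_nonneg_left hfrac hcoef,
      mul_le_mul_of_nonneg_right h12 (mul_nonneg (by linarith : (0:ℝ) ≤ 1 - γ) ha2.le)]
  · intro p hp γ₁ γ₂ h0 h12 h1
    have hpr : 0 < p + r := by linarith
    have h : γ₁ * a ^ 2 * p ^ 2 / (p + r) ≤ γ₂ * a ^ 2 * p ^ 2 / (p + r) := by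
      gcongr
    linarith
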